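/- arXiv:math/0612536 — 4 statements merged into one kernel-verified Lean document; each statement's English description precedes it below -/
import Mathlib

section
/- Suppose B : [k₀, ∞) → ℝ is nonnegative and nonincreasing, and there exist constants C > 0, k₀ > 0, and γ > 1 such that (h − k)·B(h) ≤ C·k·(B(k))^γ for all h, k with k₀ ≤ k < h. Then there exists K < ∞ (depending only on C, γ, k₀, and B(k₀)) such that B(K) = 0. -/
/-!
On `[a, 2a]` the factor `k` is at most `2a`, so there the hypothesis is the classical Stampacchia
inequality `(h - k) B(h) ≤ M B(k)^γ` with `M = 2aC`. Along `k_s = a + d - d / 2^s` the values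
`y_s = B(k_s)` satisfy `y_{s+1} ≤ (2M/d) 2^s y_s^γ`, which forces the geometric decay
`y_s ≤ y_0 2^{-s/(γ-1)}` once `M y_0^(γ-1)` is small compared with `d`; hence `B(a + d) = 0`.
Taking `d = a`, the smallness only asks `B(a)` to be small, and `B(a) → 0` because
`(a - k₀) B(a) ≤ C k₀ B(k₀)^γ`.
-/

open Filter Topology Set

theorem le_mul_pow_of_le_mul_pow_mul_rpow {y : ℕ → ℝ} {b c r γ : ℝ} (hy : ∀ s, 0 ≤ y s)
    (hγ : 0 < γ) (hc : 0 ≤ c) (hr : 0 ≤ r) (hrb : r ^ (γ - 1) * b = 1)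
    (hrec : ∀ s : ℕ, y (s + 1) ≤ c * b ^ s * y s ^ γ) (h0 : c * y 0 ^ (γ - 1) ≤ r) (s : ℕ) :
    y s ≤ y 0 * r ^ s := by
  induction s with
  | zero => simp
  | succ s ih =>
    have hb : 0 < b := by nlinarith [Real.rpow_nonneg hr (γ - 1)]
    have hz : 0 ≤ y 0 * r ^ s := mul_nonneg (hy 0) (pow_nonneg hr s)
    have hcancel : b ^ s * (y 0 * r ^ s) ^ γ = y 0 ^ (γ - 1) * (y 0 * r ^ s) := by
      calc b ^ s * (y 0 * r ^ s) ^ γ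
          = (r ^ (γ - 1) * b) ^ s * y 0 ^ (γ - 1) * (y 0 * r ^ s) := by
            conv_lhs => rw [show γ = 1 + (γ - 1) by ring]
            rw [Real.rpow_one_add' hz (by linarith), Real.mul_rpow (hy 0) (pow_nonneg hr s),
              ← Real.rpow_pow_comm hr]
            ring
        _ = y 0 ^ (γ - 1) * (y 0 * r ^ s) := by rw [hrb, one_pow, one_mul]
    calc y (s + 1) ≤ c * b ^ s * y s ^ γ := hrec s
      _ ≤ c * b ^ s * (y 0 * r ^ s) ^ γ := by gcongr; exact hy s
      _ = c * y 0 ^ (γ - 1) * (y 0 * r ^ s) := by rw [mul_assoc, hcancel, mul_assoc]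
      _ ≤ r * (y 0 * r ^ s) := by gcongr
      _ = y 0 * r ^ (s + 1) := by ring

theorem eq_zero_of_sub_mul_le_mul_rpow_on_Icc {φ : ℝ → ℝ} {a d M γ : ℝ} (hd : 0 < d)
    (hM : 0 ≤ M) (hγ : 1 < γ) (hφ : AntitoneOn φ (Icc a (a + d))) (hφ0 : 0 ≤ φ (a + d))
    (hiter : ∀ k h, a ≤ k → k < h → h ≤ a + d → (h - k) * φ h ≤ M * φ k ^ γ)
    (hsmall : 2 * M * 2 ^ (γ - 1)⁻¹ * φ a ^ (γ - 1) ≤ d) : φ (a + d) = 0 := by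
  set k : ℕ → ℝ := fun s => a + d - d / 2 ^ s
  have hk_mem : ∀ s, k s ∈ Icc a (a + d) := fun s => by
    have : d / 2 ^ s ≤ d := div_le_self hd.le (one_le_pow₀ one_le_two)
    constructor <;> simp only [k] <;> linarith [div_pos hd (pow_pos two_pos s)]
  have hk_succ : ∀ s, k (s + 1) - k s = d / 2 ^ (s + 1) := fun s => by
    simp only [k, pow_succ]; field_simp; ring
  have hk_lt : ∀ s, k s < k (s + 1) := fun s => by
    linarith [hk_succ s, div_pos hd (pow_pos two_pos (s + 1))]
  have hφk : ∀ s, φ (a + d) ≤ φ (k s) := fun s =>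
    hφ (hk_mem s) ⟨by linarith [hd], le_rfl⟩ (hk_mem s).2
  set t : ℝ := 2 ^ (γ - 1)⁻¹
  have ht : 1 < t := Real.one_lt_rpow one_lt_two (by simp; linarith)
  have htγ : t⁻¹ ^ (γ - 1) * 2 = 1 := by
    rw [Real.inv_rpow (by positivity), Real.rpow_inv_rpow zero_le_two (by linarith),
      inv_mul_cancel₀ two_ne_zero]
  have hrec : ∀ s : ℕ, φ (k (s + 1)) ≤ 2 * M / d * 2 ^ s * φ (k s) ^ γ := fun s => by
    have h := hiter (k s) (k (s + 1)) (hk_mem s).1 (hk_lt s) (hk_mem (s + 1)).2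
    rw [hk_succ, div_mul_eq_mul_div, div_le_iff₀ (by positivity)] at h
    calc φ (k (s + 1)) = d * φ (k (s + 1)) / d := by field_simp
      _ ≤ M * φ (k s) ^ γ * 2 ^ (s + 1) / d := by gcongr
      _ = 2 * M / d * 2 ^ s * φ (k s) ^ γ := by ring
  have h0 : 2 * M / d * φ (k 0) ^ (γ - 1) ≤ t⁻¹ := by
    calc 2 * M / d * φ (k 0) ^ (γ - 1) = 2 * M * t * φ a ^ (γ - 1) / d * t⁻¹ := by
          simp only [k]; field_simp; ring_nf
      _ ≤ 1 * t⁻¹ := by gcongr; exact div_le_one_of_le₀ hsmall hd.le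
      _ = t⁻¹ := one_mul _
  have hdecay : ∀ s, φ (a + d) ≤ φ a * t⁻¹ ^ s := fun s => by
    have := le_mul_pow_of_le_mul_pow_mul_rpow (y := fun s => φ (k s))
      (fun s => hφ0.trans (hφk s)) (by linarith) (by positivity) (by positivity) htγ hrec h0 s
    simpa [k] using (hφk s).trans this
  have hlim : Tendsto (fun s : ℕ => φ a * t⁻¹ ^ s) atTop (𝓝 0) := by
    simpa using (tendsto_pow_atTop_nhds_zero_of_lt_one (by positivity)
      (inv_lt_one_of_one_lt₀ ht)).const_mul (φ a)
  exact le_antisymm (ge_of_tendsto' hlim hdecay) hφ0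

theorem tendsto_nhds_zero_of_sub_mul_le {B : ℝ → ℝ} {k₀ Q : ℝ}
    (hB : ∀ h, k₀ < h → 0 ≤ B h) (hQ : ∀ h, k₀ < h → (h - k₀) * B h ≤ Q) :
    Tendsto B atTop (𝓝 0) := by
  have hbound : Tendsto (fun h => Q / (h - k₀)) atTop (𝓝 0) :=
    tendsto_const_nhds.div_atTop (tendsto_atTop_add_const_right _ _ tendsto_id)
  refine tendsto_of_tendsto_of_tendsto_of_le_of_le' tendsto_const_nhds hbound ?_ ?_
  · filter_upwards [eventually_gt_atTop k₀] with h hh using hB h hh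
  · filter_upwards [eventually_gt_atTop k₀] with h hh
    rw [le_div_iff₀ (sub_pos.2 hh), mul_comm]
    exact hQ h hh

/-- Stampacchia-type lemma: if `B` is nonnegative and nonincreasing
on `[k₀, ∞)` and `(h - k) * B h ≤ C * k * (B k) ^ γ` for all `k₀ ≤ k < h`, with
`C > 0`, `k₀ > 0`, `γ > 1`, then `B K = 0` for some finite `K`. -/
theorem stmt_1 (B : ℝ → ℝ) (C k₀ γ : ℝ) (hC : 0 < C) (hk₀ : 0 < k₀) (hγ : 1 < γ)
    (hBnonneg : ∀ t, k₀ ≤ t → 0 ≤ B t)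
    (hBmono : ∀ s t, k₀ ≤ s → s ≤ t → B t ≤ B s)
    (hiter : ∀ h k, k₀ ≤ k → k < h → (h - k) * B h ≤ C * k * B k ^ γ) :
    ∃ K : ℝ, k₀ ≤ K ∧ B K = 0 := by
  have hB : Tendsto B atTop (𝓝 0) := tendsto_nhds_zero_of_sub_mul_le
    (fun h hh => hBnonneg h hh.le) (fun h hh => hiter h k₀ le_rfl hh)
  have hsmall : ∀ᶠ a in atTop, 4 * C * 2 ^ (γ - 1)⁻¹ * B a ^ (γ - 1) ≤ 1 := by
    have := (hB.rpow_const (Or.inr (sub_nonneg.2 hγ.le))).const_mul (4 * C * 2 ^ (γ - 1)⁻¹)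
    rw [Real.zero_rpow (sub_ne_zero.2 hγ.ne'), mul_zero] at this
    exact this.eventually (ge_mem_nhds one_pos)
  obtain ⟨a, ha, hk₀a⟩ := (hsmall.and (eventually_ge_atTop k₀)).exists
  have hapos : 0 < a := hk₀.trans_le hk₀a
  refine ⟨a + a, by linarith, eq_zero_of_sub_mul_le_mul_rpow_on_Icc (M := C * (a + a)) hapos
    (by positivity) hγ ?_ (hBnonneg _ (by linarith)) ?_ (by nlinarith)⟩
  · exact fun s hs t _ hst => hBmono s t (hk₀a.trans hs.1) hst
  · intro k h hak hkh hh
    calc (h - k) * B h ≤ C * k * B k ^ γ := hiter h k (hk₀a.trans hak) hkh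
      _ ≤ C * (a + a) * B k ^ γ := by
        gcongr
        · exact Real.rpow_nonneg (hBnonneg k (hk₀a.trans hak)) γ
        · linarith
end

section
/- Suppose B : [k₀, ∞) → ℝ is nonnegative and nonincreasing, and there exist constants C > 0, k₀ > 0, and γ > 1 such that (h − k)·B(h) ≤ C·h·(B(k))^γ for all h, k with k₀ ≤ k < h. If in addition C·(B(k₀))^{γ−1} < 1, then there exists K < ∞ such that B(K) = 0. -/
/-!
Write `b₀ = B k₀` and `q₀ = C b₀^(γ-1) < 1`. Taking `h = c k` in the hypothesis and bounding
`B(k)^γ ≤ b₀^(γ-1) B(k)` gives `B(c k) ≤ c/(c-1) · q₀ · B(k)`, a geometric decay along `c^n k₀`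
once `c` is large. Hence `B(k₁)` is as small as we like for some `k₁ ≥ k₀`. On `[k₁, 2k₁]` the
factor `h` is at most `2k₁`, so the hypothesis becomes the classical Stampacchia inequality
`(h - k) B(h) ≤ M B(k)^γ`, whose iteration along `k₁ + k₁(1 - 2^{-n})` forces `B(2k₁) = 0`
as soon as `2^{γ/(γ-1)} M B(k₁)^(γ-1) ≤ k₁`.
-/

open Filter Topology Set

lemma rpow_eq_rpow_sub_one_mul {x γ : ℝ} (hx : 0 ≤ x) (hγ : γ ≠ 0) :
    x ^ γ = x ^ (γ - 1) * x := by
  conv_lhs => rw [← sub_add_cancel γ 1]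
  rw [Real.rpow_add' hx (by simpa using hγ), Real.rpow_one]

section Stampacchia

variable {φ : ℝ → ℝ} {a d M γ : ℝ}

lemma add_sub_div_two_pow_mem_Icc (hd : 0 ≤ d) (n : ℕ) : a + d - d / 2 ^ n ∈ Icc a (a + d) :=
  ⟨by linarith [div_le_self hd (one_le_pow₀ (M₀ := ℝ) one_le_two (n := n))],
    by linarith [div_nonneg hd (pow_nonneg zero_le_two n)]⟩

lemma apply_add_sub_div_two_pow_le (hγ : 1 < γ) (hd : 0 < d) (hM : 0 ≤ M)
    (hnonneg : ∀ t ∈ Icc a (a + d), 0 ≤ φ t)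
    (hiter : ∀ k h, a ≤ k → k < h → h ≤ a + d → (h - k) * φ h ≤ M * φ k ^ γ)
    (hsmall : 2 * 2 ^ (γ - 1)⁻¹ * M * φ a ^ (γ - 1) ≤ d) (n : ℕ) :
    φ (a + d - d / 2 ^ n) ≤ φ a / (2 ^ (γ - 1)⁻¹) ^ n := by
  set s : ℝ := 2 ^ (γ - 1)⁻¹
  have hs : 0 < s := by positivity
  have hs_rpow : s ^ (γ - 1) = 2 := Real.rpow_inv_rpow (by norm_num) (by linarith)
  have hφa : 0 ≤ φ a := hnonneg a ⟨le_rfl, by linarith⟩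
  induction n with
  | zero => simp
  | succ n ih =>
    set k := a + d - d / 2 ^ n
    set h := a + d - d / 2 ^ (n + 1)
    have hgap : h - k = d / 2 ^ (n + 1) := by simp only [h, k]; field_simp; ring
    have hgap_pos : 0 < d / 2 ^ (n + 1) := by positivity
    have hk : a ≤ k := (add_sub_div_two_pow_mem_Icc hd.le n).1
    have hφk : 0 ≤ φ k := hnonneg k (add_sub_div_two_pow_mem_Icc hd.le n)
    have hφk_rpow : φ k ^ (γ - 1) ≤ φ a ^ (γ - 1) / 2 ^ n := by
      calc φ k ^ (γ - 1) ≤ (φ a / s ^ n) ^ (γ - 1) := Real.rpow_le_rpow hφk ih (by linarith)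
        _ = φ a ^ (γ - 1) / 2 ^ n := by
          rw [Real.div_rpow hφa (by positivity), ← Real.rpow_pow_comm hs.le, hs_rpow]
    have hM_small : M * φ a ^ (γ - 1) ≤ d / (2 * s) := by
      rw [le_div_iff₀ (by positivity)]; linarith
    refine le_of_mul_le_mul_left ?_ hgap_pos
    calc d / 2 ^ (n + 1) * φ h = (h - k) * φ h := by rw [hgap]
      _ ≤ M * φ k ^ γ := hiter k h hk (by linarith) (add_sub_div_two_pow_mem_Icc hd.le _).2
      _ = M * φ k ^ (γ - 1) * φ k := by rw [rpow_eq_rpow_sub_one_mul hφk (by linarith)]; ring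
      _ ≤ M * (φ a ^ (γ - 1) / 2 ^ n) * (φ a / s ^ n) := by gcongr
      _ = M * φ a ^ (γ - 1) * (φ a / (2 ^ n * s ^ n)) := by field_simp
      _ ≤ d / (2 * s) * (φ a / (2 ^ n * s ^ n)) := by gcongr
      _ = d / 2 ^ (n + 1) * (φ a / s ^ (n + 1)) := by field_simp; ring

lemma eq_zero_of_sub_mul_le_rpow (hγ : 1 < γ) (hd : 0 < d) (hM : 0 ≤ M)
    (hnonneg : ∀ t ∈ Icc a (a + d), 0 ≤ φ t) (hanti : AntitoneOn φ (Icc a (a + d)))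
    (hiter : ∀ k h, a ≤ k → k < h → h ≤ a + d → (h - k) * φ h ≤ M * φ k ^ γ)
    (hsmall : 2 ^ (γ / (γ - 1)) * M * φ a ^ (γ - 1) ≤ d) :
    φ (a + d) = 0 := by
  have hexp : (2 : ℝ) ^ (γ / (γ - 1)) = 2 * 2 ^ (γ - 1)⁻¹ := by
    have hγ₁ : γ - 1 ≠ 0 := (sub_pos.2 hγ).ne'
    rw [show γ / (γ - 1) = 1 + (γ - 1)⁻¹ by field_simp; ring,
      Real.rpow_add two_pos, Real.rpow_one]
  have hend : a + d ∈ Icc a (a + d) := ⟨by linarith, le_rfl⟩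
  have hbound (n : ℕ) : φ (a + d) ≤ φ a / (2 ^ (γ - 1)⁻¹) ^ n := by
    have hmem := add_sub_div_two_pow_mem_Icc (a := a) hd.le n
    exact (hanti hmem hend hmem.2).trans
      (apply_add_sub_div_two_pow_le hγ hd hM hnonneg hiter (hexp ▸ hsmall) n)
  have hlim : Tendsto (fun n : ℕ => φ a / (2 ^ (γ - 1)⁻¹) ^ n) atTop (𝓝 0) :=
    tendsto_const_nhds.div_atTop (tendsto_pow_atTop_atTop_of_one_lt
      (Real.one_lt_rpow one_lt_two (inv_pos.2 (by linarith))))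
  exact le_antisymm (ge_of_tendsto' hlim hbound) (hnonneg _ hend)

end Stampacchia

lemma tendsto_apply_pow_mul_nhds_zero {B : ℝ → ℝ} {k₀ c q : ℝ} (hk₀ : 0 ≤ k₀) (hc : 1 ≤ c)
    (hq₀ : 0 ≤ q) (hq₁ : q < 1) (hnonneg : ∀ t, k₀ ≤ t → 0 ≤ B t)
    (hstep : ∀ k, k₀ ≤ k → B (c * k) ≤ q * B k) :
    Tendsto (fun n : ℕ => B (c ^ n * k₀)) atTop (𝓝 0) := by
  have hle (n : ℕ) : k₀ ≤ c ^ n * k₀ := le_mul_of_one_le_left hk₀ (one_le_pow₀ hc)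
  have hdecay (n : ℕ) : B (c ^ n * k₀) ≤ q ^ n * B k₀ := by
    induction n with
    | zero => simp
    | succ n ih =>
      calc B (c ^ (n + 1) * k₀) = B (c * (c ^ n * k₀)) := by ring_nf
        _ ≤ q * B (c ^ n * k₀) := hstep _ (hle n)
        _ ≤ q * (q ^ n * B k₀) := by gcongr
        _ = q ^ (n + 1) * B k₀ := by ring
  have hgeom := (tendsto_pow_atTop_nhds_zero_of_lt_one hq₀ hq₁).mul_const (B k₀)
  rw [zero_mul] at hgeom
  exact squeeze_zero (fun n => hnonneg _ (hle n)) hdecay hgeom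

lemma apply_mul_le_of_sub_mul_le {B : ℝ → ℝ} {C k₀ γ c k : ℝ} (hC : 0 ≤ C) (hk₀ : 0 < k₀)
    (hγ : 1 < γ) (hBnonneg : ∀ t, k₀ ≤ t → 0 ≤ B t)
    (hBmono : ∀ s t, k₀ ≤ s → s ≤ t → B t ≤ B s)
    (hiter : ∀ h k, k₀ ≤ k → k < h → (h - k) * B h ≤ C * h * B k ^ γ)
    (hc : 1 < c) (hk : k₀ ≤ k) :
    B (c * k) ≤ c / (c - 1) * (C * B k₀ ^ (γ - 1)) * B k := by
  have hk_pos : 0 < k := hk₀.trans_le hk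
  have hBk : 0 ≤ B k := hBnonneg k hk
  have hc₁ : 0 < c - 1 := sub_pos.2 hc
  refine le_of_mul_le_mul_left ?_ (mul_pos hc₁ hk_pos)
  calc (c - 1) * k * B (c * k) = (c * k - k) * B (c * k) := by ring
    _ ≤ C * (c * k) * B k ^ γ := hiter _ _ hk (by nlinarith)
    _ = C * c * k * B k ^ (γ - 1) * B k := by
      rw [rpow_eq_rpow_sub_one_mul hBk (by linarith)]; ring
    _ ≤ C * c * k * B k₀ ^ (γ - 1) * B k := by
      gcongr
      exact hBmono k₀ k le_rfl hk
    _ = (c - 1) * k * (c / (c - 1) * (C * B k₀ ^ (γ - 1)) * B k) := by field_simp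

lemma exists_apply_rpow_lt_of_sub_mul_le {B : ℝ → ℝ} {C k₀ γ η : ℝ} (hC : 0 ≤ C)
    (hk₀ : 0 < k₀) (hγ : 1 < γ) (hBnonneg : ∀ t, k₀ ≤ t → 0 ≤ B t)
    (hBmono : ∀ s t, k₀ ≤ s → s ≤ t → B t ≤ B s)
    (hiter : ∀ h k, k₀ ≤ k → k < h → (h - k) * B h ≤ C * h * B k ^ γ)
    (hsmall : C * B k₀ ^ (γ - 1) < 1) (hη : 0 < η) :
    ∃ k, k₀ ≤ k ∧ B k ^ (γ - 1) < η := by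
  set q₀ := C * B k₀ ^ (γ - 1)
  have hq₀ : 0 ≤ q₀ := mul_nonneg hC (Real.rpow_nonneg (hBnonneg k₀ le_rfl) _)
  set c := 2 / (1 - q₀)
  have hc : 1 < c := by rw [lt_div_iff₀ (by linarith)]; linarith
  have hcq : c / (c - 1) * q₀ = 2 * q₀ / (1 + q₀) := by
    have hc₁ : c - 1 = (1 + q₀) / (1 - q₀) := by
      simp only [c]; field_simp [show 1 - q₀ ≠ 0 by linarith]; ring
    rw [hc₁, div_div_div_cancel_right₀ (by linarith)]
    ring
  have hq : 2 * q₀ / (1 + q₀) < 1 := by rw [div_lt_one (by linarith)]; linarith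
  have hdecay := tendsto_apply_pow_mul_nhds_zero hk₀.le hc.le (by positivity) hq hBnonneg
    fun k hk ↦ hcq ▸ apply_mul_le_of_sub_mul_le hC hk₀ hγ hBnonneg hBmono hiter hc hk
  have hlim := hdecay.rpow_const (p := γ - 1) (Or.inr (by linarith))
  rw [Real.zero_rpow (by linarith)] at hlim
  obtain ⟨n, hn⟩ := (hlim.eventually (gt_mem_nhds hη)).exists
  exact ⟨c ^ n * k₀, le_mul_of_one_le_left hk₀.le (one_le_pow₀ hc.le), hn⟩

/-- Stampacchia-type lemma, second variant: if `B` is nonnegative and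
nonincreasing on `[k₀, ∞)` and `(h - k) * B h ≤ C * h * (B k) ^ γ` for all
`k₀ ≤ k < h`, with `C > 0`, `k₀ > 0`, `γ > 1`, and moreover
`C * (B k₀) ^ (γ - 1) < 1`, then `B K = 0` for some finite `K`. -/
theorem stmt_2 (B : ℝ → ℝ) (C k₀ γ : ℝ) (hC : 0 < C) (hk₀ : 0 < k₀) (hγ : 1 < γ)
    (hBnonneg : ∀ t, k₀ ≤ t → 0 ≤ B t)
    (hBmono : ∀ s t, k₀ ≤ s → s ≤ t → B t ≤ B s)
    (hiter : ∀ h k, k₀ ≤ k → k < h → (h - k) * B h ≤ C * h * B k ^ γ)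
    (hsmall : C * B k₀ ^ (γ - 1) < 1) :
    ∃ K : ℝ, k₀ ≤ K ∧ B K = 0 := by
  set A : ℝ := 2 ^ (γ / (γ - 1)) * (2 * C)
  have hA : 0 < A := by positivity
  obtain ⟨k₁, hk₁, hB₁⟩ := exists_apply_rpow_lt_of_sub_mul_le hC.le hk₀ hγ hBnonneg hBmono
    hiter hsmall (inv_pos.2 hA)
  have hk₁_pos : 0 < k₁ := hk₀.trans_le hk₁
  refine ⟨k₁ + k₁, by linarith, eq_zero_of_sub_mul_le_rpow (M := C * (k₁ + k₁)) hγ (by linarith)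
    (by positivity) (fun t ht ↦ hBnonneg t (hk₁.trans ht.1))
    (fun s hs t _ hst ↦ hBmono s t (hk₁.trans hs.1) hst) ?_ ?_⟩
  · intro k h hk hkh hh
    calc (h - k) * B h ≤ C * h * B k ^ γ := hiter h k (hk₁.trans hk) hkh
      _ ≤ C * (k₁ + k₁) * B k ^ γ := by
        gcongr; exact Real.rpow_nonneg (hBnonneg k (hk₁.trans hk)) γ
  · calc 2 ^ (γ / (γ - 1)) * (C * (k₁ + k₁)) * B k₁ ^ (γ - 1)
          = A * B k₁ ^ (γ - 1) * k₁ := by ring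
      _ ≤ A * A⁻¹ * k₁ := by gcongr
      _ = k₁ := by rw [mul_inv_cancel₀ hA.ne', one_mul]
end

section
/- For v ∈ L¹_loc(Ω), the quantity F(v) is finite if and only if v ∈ BV(Ω), i.e. if and only if v ∈ L¹(Ω) and A(v) < ∞. -/
/-!
Both functionals are suprema over the same test fields `g = (g', gₙ₊₁)` with `|g| ≤ 1`, and their
integrands differ only in the zeroth-order terms `v gₙ₊₁` and `gₙ₊₁`. Since `|∫_Ω gₙ₊₁| ≤ |Ω|` and
`∫_Ω v gₙ₊₁ ≤ ∫_Ω |v|`, this gives `A(v) ≤ |Ω| + F(v)` and `F(v) ≤ ∫_Ω |v| + |Ω| + A(v)`.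

It remains to see that `F(v) < ∞` forces `v ∈ L¹(Ω)`. Taking `g' = 0`, `F(v)` bounds `∫_Ω v φ` for
every smooth `φ` with `|φ| ≤ 1` and compact support in `Ω`. Mollifying the sign of `v` on a compact
`K ⊆ Ω` and passing to the limit by dominated convergence gives `∫_K |v| ≤ F(v)` for every such `K`,
and `Ω` is exhausted by countably many compact sets.
-/

open MeasureTheory
open scoped ENNReal

/-- A family `g = (g₁, …, g_{n+1})` of test vector fields for the weighted area
functional: each `gᵢ` is `C¹` with compact support contained in `Ω`, and
`∑ᵢ gᵢ(x)² ≤ 1` for every `x`. -/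
def Admissible (n : ℕ) (Ω : Set (EuclideanSpace ℝ (Fin n)))
    (g : Fin (n + 1) → EuclideanSpace ℝ (Fin n) → ℝ) : Prop :=
  (∀ i, ContDiff ℝ 1 (g i)) ∧ (∀ i, HasCompactSupport (g i)) ∧
    (∀ i, tsupport (g i) ⊆ Ω) ∧ ∀ x, ∑ i, g i x ^ 2 ≤ 1

/-- `F(v) = ∫_Ω √(v² + |Dv|²)`, defined by duality as a value in `[0, ∞]`. -/
noncomputable def Ffun (n : ℕ) (Ω : Set (EuclideanSpace ℝ (Fin n)))
    (v : EuclideanSpace ℝ (Fin n) → ℝ) : ℝ≥0∞ :=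
  ⨆ g : { g // Admissible n Ω g },
    ENNReal.ofReal (∫ x in Ω, v x * (g.1 (Fin.last n) x +
      ∑ i : Fin n, fderiv ℝ (g.1 i.castSucc) x (EuclideanSpace.single i 1)))

/-- `A(v) = ∫_Ω √(1 + |Dv|²)`, the area functional, defined by duality. -/
noncomputable def Afun (n : ℕ) (Ω : Set (EuclideanSpace ℝ (Fin n)))
    (v : EuclideanSpace ℝ (Fin n) → ℝ) : ℝ≥0∞ :=
  ⨆ g : { g // Admissible n Ω g },
    ENNReal.ofReal (∫ x in Ω, (g.1 (Fin.last n) x +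
      v x * ∑ i : Fin n, fderiv ℝ (g.1 i.castSucc) x (EuclideanSpace.single i 1)))

/-- Test fields for the total variation: `n` components. -/
def AdmissibleT (n : ℕ) (Ω : Set (EuclideanSpace ℝ (Fin n)))
    (g : Fin n → EuclideanSpace ℝ (Fin n) → ℝ) : Prop :=
  (∀ i, ContDiff ℝ 1 (g i)) ∧ (∀ i, HasCompactSupport (g i)) ∧
    (∀ i, tsupport (g i) ⊆ Ω) ∧ ∀ x, ∑ i, g i x ^ 2 ≤ 1

/-- `T(v) = ∫_Ω |Dv|`, the total variation, defined by duality. -/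
noncomputable def Tfun (n : ℕ) (Ω : Set (EuclideanSpace ℝ (Fin n)))
    (v : EuclideanSpace ℝ (Fin n) → ℝ) : ℝ≥0∞ :=
  ⨆ g : { g // AdmissibleT n Ω g },
    ENNReal.ofReal (∫ x in Ω,
      v x * ∑ i : Fin n, fderiv ℝ (g.1 i) x (EuclideanSpace.single i 1))

open Metric Set Function Filter
open scoped Convolution Topology Pointwise ContDiff

section Integration

variable {X : Type*} [MeasurableSpace X] {μ : Measure X}

theorem MeasureTheory.LocallyIntegrableOn.integrableOn_mul_of_hasCompactSupport
    [TopologicalSpace X] [T2Space X] [OpensMeasurableSpace X] {Ω : Set X} {v h : X → ℝ}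
    (hv : LocallyIntegrableOn v Ω μ) (hh : Continuous h) (hhc : HasCompactSupport h)
    (hhΩ : tsupport h ⊆ Ω) :
    IntegrableOn (fun x => v x * h x) Ω μ := by
  have hK : IntegrableOn (fun x => v x * h x) (tsupport h) μ :=
    (hv.integrableOn_compact_subset hhΩ hhc).mul_continuousOn hh.continuousOn hhc
  exact ((integrableOn_iff_integrable_of_support_subset
    ((support_mul_subset_right v h).trans subset_closure)).1 hK).integrableOn

theorem ofReal_integral_mul_le_lintegral_enorm {f h : X → ℝ} (hh : ∀ x, |h x| ≤ 1) :
    ENNReal.ofReal (∫ x, f x * h x ∂μ) ≤ ∫⁻ x, ‖f x‖ₑ ∂μ :=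
  calc ENNReal.ofReal (∫ x, f x * h x ∂μ) ≤ ‖∫ x, f x * h x ∂μ‖ₑ := Real.ofReal_le_enorm _
    _ ≤ ∫⁻ x, ‖f x * h x‖ₑ ∂μ := enorm_integral_le_lintegral_enorm _
    _ ≤ ∫⁻ x, ‖f x‖ₑ ∂μ := lintegral_mono fun x => by
        rw [enorm_mul]
        refine mul_le_of_le_one_right' ?_
        rw [Real.enorm_eq_ofReal_abs, ← ENNReal.ofReal_one]
        exact ENNReal.ofReal_le_ofReal (hh x)

theorem ofReal_setIntegral_le_measure {h : X → ℝ} (hh : ∀ x, |h x| ≤ 1) (s : Set X) :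
    ENNReal.ofReal (∫ x in s, h x ∂μ) ≤ μ s := by
  simpa using ofReal_integral_mul_le_lintegral_enorm (μ := μ.restrict s) (f := fun _ => 1) hh

theorem exists_measurable_abs_le_one_mul_ae_eq_abs {v : X → ℝ}
    (hv : AEStronglyMeasurable v μ) :
    ∃ s : X → ℝ, Measurable s ∧ (∀ x, |s x| ≤ 1) ∧
      (fun x => v x * s x) =ᵐ[μ] fun x => |v x| := by
  refine ⟨fun x => if 0 ≤ hv.mk v x then 1 else -1,
    Measurable.ite (measurableSet_le measurable_const hv.stronglyMeasurable_mk.measurable)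
      measurable_const measurable_const, fun x => by dsimp only; split_ifs <;> simp, ?_⟩
  filter_upwards [hv.ae_eq_mk] with x hx
  split_ifs with h
  · rw [mul_one, abs_of_nonneg (hx ▸ h)]
  · rw [mul_neg_one, abs_of_neg (hx ▸ not_le.mp h)]

theorem IsSigmaCompact.setLIntegral_le_of_forall_isCompact [TopologicalSpace X] [T2Space X]
    [OpensMeasurableSpace X] {Ω : Set X} (hΩ : IsSigmaCompact Ω) {f : X → ℝ≥0∞} {c : ℝ≥0∞}
    (hc : ∀ K, IsCompact K → K ⊆ Ω → ∫⁻ x in K, f x ∂μ ≤ c) :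
    ∫⁻ x in Ω, f x ∂μ ≤ c := by
  obtain ⟨K, hKc, rfl⟩ := hΩ
  have hacc (m : ℕ) : IsCompact (accumulate K m) := isCompact_accumulate hKc m
  rw [← withDensity_apply _ (MeasurableSet.iUnion fun m => (hKc m).measurableSet),
    measure_iUnion_eq_iSup_accumulate]
  refine iSup_le fun m => ?_
  rw [withDensity_apply _ (hacc m).measurableSet]
  exact hc _ (hacc m) (accumulate_subset_iUnion m)

end Integration

section Mollification

variable {E : Type*} [NormedAddCommGroup E] [NormedSpace ℝ E] [FiniteDimensional ℝ E]
  [MeasurableSpace E] [BorelSpace E] {μ : Measure E} [μ.IsAddHaarMeasure]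

theorem ContDiffBump.tsupport_convolution_normed_subset {w : E → ℝ} {K : Set E}
    (hwK : support w ⊆ K) (φ : ContDiffBump (0 : E)) :
    tsupport (φ.normed μ ⋆[ContinuousLinearMap.lsmul ℝ ℝ, μ] w) ⊆ cthickening φ.rOut K := by
  refine closure_minimal ?_ isClosed_cthickening
  calc support (φ.normed μ ⋆[ContinuousLinearMap.lsmul ℝ ℝ, μ] w)
      ⊆ support (φ.normed μ) + support w := support_convolution_subset _
    _ ⊆ ball 0 φ.rOut + K := by rw [φ.support_normed_eq]; exact add_subset_add_left hwK
    _ = thickening φ.rOut K := ball_add_zero _ _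
    _ ⊆ cthickening φ.rOut K := thickening_subset_cthickening _ _

theorem ContDiffBump.abs_convolution_normed_le_one {w : E → ℝ} (hw : AEStronglyMeasurable w μ)
    (hwb : ∀ x, |w x| ≤ 1) (φ : ContDiffBump (0 : E)) (x : E) :
    |(φ.normed μ ⋆[ContinuousLinearMap.lsmul ℝ ℝ, μ] w) x| ≤ 1 := by
  simpa [Real.dist_eq] using dist_convolution_le (z₀ := 0) zero_le_one
    φ.support_normed_eq.subset φ.nonneg_normed φ.integral_normed hw
    fun y _ => by simpa [Real.dist_eq] using hwb y

theorem exists_seq_contDiff_tendsto_ae {w : E → ℝ} (hw : LocallyIntegrable w μ)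
    (hwb : ∀ x, |w x| ≤ 1) {K : Set E} (hwK : support w ⊆ K) {δ : ℝ} (hδ : 0 < δ) :
    ∃ ψ : ℕ → E → ℝ, (∀ j, ContDiff ℝ ∞ (ψ j)) ∧ (∀ j, tsupport (ψ j) ⊆ cthickening δ K) ∧
      (∀ j x, |ψ j x| ≤ 1) ∧ ∀ᵐ x ∂μ, Tendsto (ψ · x) atTop (𝓝 (w x)) := by
  let φ (j : ℕ) : ContDiffBump (0 : E) :=
    ⟨δ / (j + 1) / 2, δ / (j + 1), by positivity, half_lt_self (by positivity)⟩
  have hrOut (j : ℕ) : (φ j).rOut ≤ δ := div_le_self hδ.le (by simp)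
  have hrOut_tendsto : Tendsto (fun j => (φ j).rOut) atTop (𝓝 0) := by
    have := (tendsto_const_div_atTop_nhds_zero_nat δ).comp (tendsto_add_atTop_nat 1)
    simpa [φ, Function.comp_def] using this
  refine ⟨fun j => (φ j).normed μ ⋆[ContinuousLinearMap.lsmul ℝ ℝ, μ] w,
    fun j => (φ j).hasCompactSupport_normed.contDiff_convolution_left _ (φ j).contDiff_normed hw,
    fun j => ((φ j).tsupport_convolution_normed_subset hwK).trans (cthickening_mono (hrOut j) K),
    fun j => (φ j).abs_convolution_normed_le_one hw.aestronglyMeasurable hwb,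
    ContDiffBump.ae_convolution_tendsto_right_of_locallyIntegrable (K := 2) hrOut_tendsto
      (Eventually.of_forall fun j => by simp only [φ]; linarith) hw⟩

variable {Ω : Set E} {v : E → ℝ} {C : ℝ}

theorem setIntegral_abs_le_of_forall_setIntegral_mul_le (hΩ : IsOpen Ω)
    (hv : LocallyIntegrableOn v Ω μ)
    (hC : ∀ φ : E → ℝ, ContDiff ℝ ∞ φ → HasCompactSupport φ → tsupport φ ⊆ Ω →
      (∀ x, |φ x| ≤ 1) → ∫ x in Ω, v x * φ x ∂μ ≤ C)
    {K : Set E} (hK : IsCompact K) (hKΩ : K ⊆ Ω) :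
    ∫ x in K, |v x| ∂μ ≤ C := by
  obtain ⟨δ, hδ, hLΩ⟩ := hK.exists_cthickening_subset_open hΩ hKΩ
  set L := cthickening δ K
  have hL : IsCompact L := hK.cthickening
  have hvL : IntegrableOn v L μ := hv.integrableOn_compact_subset hLΩ hL
  obtain ⟨s, hsm, hs1, hvs⟩ :=
    exists_measurable_abs_le_one_mul_ae_eq_abs (hv.aestronglyMeasurable.mono_set hKΩ)
  set w := K.indicator s
  have hw1 (x : E) : |w x| ≤ 1 := by
    by_cases hx : x ∈ K <;> simp [w, hx, hs1 x]
  have hw : Integrable w μ := (integrable_indicator_iff hK.measurableSet).2 <|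
    Measure.integrableOn_of_bounded hK.measure_lt_top.ne hsm.aestronglyMeasurable
      (M := 1) (ae_of_all _ hs1)
  obtain ⟨ψ, hψ, hψL, hψ1, hψw⟩ :=
    exists_seq_contDiff_tendsto_ae hw.locallyIntegrable hw1 support_indicator_subset hδ
  have hψ_eq (j : ℕ) : ∫ x in Ω, v x * ψ j x ∂μ = ∫ x in L, v x * ψ j x ∂μ :=
    setIntegral_eq_of_subset_of_forall_sdiff_eq_zero hΩ.measurableSet hLΩ fun x hx => by
      rw [image_eq_zero_of_notMem_tsupport fun h => hx.2 (hψL j h), mul_zero]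
  have hlim : Tendsto (fun j => ∫ x in L, v x * ψ j x ∂μ) atTop
      (𝓝 (∫ x in L, v x * w x ∂μ)) :=
    tendsto_integral_of_dominated_convergence (fun x => ‖v x‖)
      (fun j => hvL.aestronglyMeasurable.mul (hψ j).continuous.aestronglyMeasurable)
      hvL.norm (fun j => ae_of_all _ fun x => by
        simpa [abs_mul] using mul_le_of_le_one_right (abs_nonneg (v x)) (hψ1 j x))
      ((ae_restrict_of_ae hψw).mono fun x hx => hx.const_mul (v x))
  have hvw : ∫ x in L, v x * w x ∂μ = ∫ x in K, |v x| ∂μ := by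
    simp_rw [w, ← indicator_mul_right]
    rw [setIntegral_indicator hK.measurableSet, inter_eq_right.2 (self_subset_cthickening K)]
    exact integral_congr_ae hvs
  rw [← hvw]
  refine le_of_tendsto hlim (Eventually.of_forall fun j => ?_)
  rw [← hψ_eq]
  exact hC _ (hψ j) (hL.of_isClosed_subset (isClosed_tsupport _) (hψL j))
    ((hψL j).trans hLΩ) (hψ1 j)

theorem integrableOn_of_forall_setIntegral_mul_le (hΩ : IsOpen Ω)
    (hv : LocallyIntegrableOn v Ω μ)
    (hC : ∀ φ : E → ℝ, ContDiff ℝ ∞ φ → HasCompactSupport φ → tsupport φ ⊆ Ω →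
      (∀ x, |φ x| ≤ 1) → ∫ x in Ω, v x * φ x ∂μ ≤ C) :
    IntegrableOn v Ω μ := by
  have hΩσ : IsSigmaCompact Ω :=
    have := hΩ.locallyCompactSpace
    isSigmaCompact_iff_sigmaCompactSpace.2 inferInstance
  refine ⟨hv.aestronglyMeasurable, lt_of_le_of_lt ?_ (ENNReal.ofReal_lt_top (r := C))⟩
  refine hΩσ.setLIntegral_le_of_forall_isCompact fun K hK hKΩ => ?_
  rw [← ofReal_integral_norm_eq_lintegral_enorm (hv.integrableOn_compact_subset hKΩ hK)]
  exact ENNReal.ofReal_le_ofReal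
    (setIntegral_abs_le_of_forall_setIntegral_mul_le hΩ hv hC hK hKΩ)

end Mollification

section AreaFunctionals

variable {n : ℕ} {Ω : Set (EuclideanSpace ℝ (Fin n))} {v : EuclideanSpace ℝ (Fin n) → ℝ}

noncomputable def divergence (g : Fin n → EuclideanSpace ℝ (Fin n) → ℝ)
    (x : EuclideanSpace ℝ (Fin n)) : ℝ :=
  ∑ i, fderiv ℝ (g i) x (EuclideanSpace.single i 1)

theorem continuous_divergence {g : Fin n → EuclideanSpace ℝ (Fin n) → ℝ}
    (hg : ∀ i, ContDiff ℝ 1 (g i)) : Continuous (divergence g) :=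
  continuous_finsetSum _ fun i _ =>
    ((hg i).continuous_fderiv one_ne_zero).clm_apply continuous_const

theorem tsupport_divergence_subset (g : Fin n → EuclideanSpace ℝ (Fin n) → ℝ) :
    tsupport (divergence g) ⊆ ⋃ i, tsupport (g i) := by
  refine closure_minimal (fun x hx => ?_)
    (isClosed_iUnion_of_finite fun i => isClosed_tsupport _)
  obtain ⟨i, -, hi⟩ := Finset.exists_ne_zero_of_sum_ne_zero hx
  exact mem_iUnion.2 ⟨i, tsupport_fderiv_apply_subset ℝ _ (subset_closure hi)⟩

theorem divergence_zero :
    divergence (fun (_ : Fin n) (_ : EuclideanSpace ℝ (Fin n)) => (0 : ℝ)) = 0 := by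
  ext x
  simp [divergence]

theorem admissible_snoc {ψ : Fin n → EuclideanSpace ℝ (Fin n) → ℝ}
    {φ : EuclideanSpace ℝ (Fin n) → ℝ} (hψ : ∀ i, ContDiff ℝ 1 (ψ i)) (hφ : ContDiff ℝ 1 φ)
    (hψc : ∀ i, HasCompactSupport (ψ i)) (hφc : HasCompactSupport φ)
    (hψΩ : ∀ i, tsupport (ψ i) ⊆ Ω) (hφΩ : tsupport φ ⊆ Ω)
    (hsq : ∀ x, ∑ i, ψ i x ^ 2 + φ x ^ 2 ≤ 1) :
    Admissible n Ω (Fin.snoc ψ φ) := by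
  refine ⟨Fin.lastCases ?_ fun i => ?_, Fin.lastCases ?_ fun i => ?_,
    Fin.lastCases ?_ fun i => ?_, fun x => ?_⟩ <;>
    simp only [Fin.snoc_last, Fin.snoc_castSucc, Fin.sum_univ_castSucc]
  all_goals first | assumption | apply_assumption

namespace Admissible

variable {g : Fin (n + 1) → EuclideanSpace ℝ (Fin n) → ℝ}

theorem abs_le_one (hg : Admissible n Ω g) (i : Fin (n + 1)) (x : EuclideanSpace ℝ (Fin n)) :
    |g i x| ≤ 1 :=
  (sq_le_one_iff_abs_le_one _).1 <|
    (Finset.single_le_sum (fun j _ => sq_nonneg (g j x)) (Finset.mem_univ i)).trans (hg.2.2.2 x)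

theorem integrable_last (hg : Admissible n Ω g) : Integrable (g (Fin.last n)) :=
  (hg.1 _).continuous.integrable_of_hasCompactSupport (hg.2.1 _)

theorem integrableOn_mul_last (hg : Admissible n Ω g) (hv : LocallyIntegrableOn v Ω) :
    IntegrableOn (fun x => v x * g (Fin.last n) x) Ω :=
  hv.integrableOn_mul_of_hasCompactSupport (hg.1 _).continuous (hg.2.1 _) (hg.2.2.1 _)

theorem integrableOn_mul_divergence (hg : Admissible n Ω g) (hv : LocallyIntegrableOn v Ω) :
    IntegrableOn (fun x => v x * divergence (fun i => g i.castSucc) x) Ω := by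
  have hsupp := tsupport_divergence_subset fun i => g i.castSucc
  exact hv.integrableOn_mul_of_hasCompactSupport (continuous_divergence fun i => hg.1 _)
    ((isCompact_iUnion fun i => hg.2.1 _).of_isClosed_subset (isClosed_tsupport _) hsupp)
    (hsupp.trans (iUnion_subset fun i => hg.2.2.1 _))

theorem ofReal_le_Ffun (hg : Admissible n Ω g) :
    ENNReal.ofReal (∫ x in Ω, v x * (g (Fin.last n) x +
      divergence (fun i => g i.castSucc) x)) ≤ Ffun n Ω v :=
  le_iSup (fun g : { g // Admissible n Ω g } => ENNReal.ofReal (∫ x in Ω,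
    v x * (g.1 (Fin.last n) x + divergence (fun i => g.1 i.castSucc) x))) ⟨g, hg⟩

theorem ofReal_le_Afun (hg : Admissible n Ω g) :
    ENNReal.ofReal (∫ x in Ω, (g (Fin.last n) x +
      v x * divergence (fun i => g i.castSucc) x)) ≤ Afun n Ω v :=
  le_iSup (fun g : { g // Admissible n Ω g } => ENNReal.ofReal (∫ x in Ω,
    (g.1 (Fin.last n) x + v x * divergence (fun i => g.1 i.castSucc) x))) ⟨g, hg⟩

theorem ofReal_setIntegral_mul_divergence_le_Ffun (hg : Admissible n Ω g) :
    ENNReal.ofReal (∫ x in Ω, v x * divergence (fun i => g i.castSucc) x) ≤ Ffun n Ω v := by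
  have hg₀ : Admissible n Ω (Fin.snoc (fun i => g i.castSucc) 0) :=
    admissible_snoc (fun i => hg.1 _) contDiff_const (fun i => hg.2.1 _)
      HasCompactSupport.zero (fun i => hg.2.2.1 _) (by simp) fun x => by
        have hsq := hg.2.2.2 x
        rw [Fin.sum_univ_castSucc] at hsq
        simpa using (le_add_of_nonneg_right (sq_nonneg _)).trans hsq
  simpa using hg₀.ofReal_le_Ffun (v := v)

end Admissible

theorem ofReal_setIntegral_mul_le_Ffun {φ : EuclideanSpace ℝ (Fin n) → ℝ}
    (hφ : ContDiff ℝ 1 φ) (hφc : HasCompactSupport φ) (hφΩ : tsupport φ ⊆ Ω)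
    (hφ1 : ∀ x, |φ x| ≤ 1) :
    ENNReal.ofReal (∫ x in Ω, v x * φ x) ≤ Ffun n Ω v := by
  have hg : Admissible n Ω (Fin.snoc (fun _ _ => 0) φ) :=
    admissible_snoc (fun _ => contDiff_const) hφ (fun _ => HasCompactSupport.zero) hφc
      (fun _ => by simp) hφΩ fun x => by simpa using (sq_le_one_iff_abs_le_one _).2 (hφ1 x)
  simpa [divergence_zero] using hg.ofReal_le_Ffun (v := v)

theorem Afun_le_volume_add_Ffun (hv : LocallyIntegrableOn v Ω) :
    Afun n Ω v ≤ volume Ω + Ffun n Ω v := by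
  refine iSup_le fun ⟨g, hg⟩ => ?_
  change ENNReal.ofReal (∫ x in Ω, (g (Fin.last n) x +
    v x * divergence (fun i => g i.castSucc) x)) ≤ _
  rw [integral_add hg.integrable_last.integrableOn (hg.integrableOn_mul_divergence hv)]
  exact ENNReal.ofReal_add_le.trans <| add_le_add
    (ofReal_setIntegral_le_measure (hg.abs_le_one (Fin.last n)) Ω)
    hg.ofReal_setIntegral_mul_divergence_le_Ffun

theorem Ffun_le_lintegral_add_volume_add_Afun (hv : LocallyIntegrableOn v Ω) :
    Ffun n Ω v ≤ (∫⁻ x in Ω, ‖v x‖ₑ) + volume Ω + Afun n Ω v := by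
  refine iSup_le fun ⟨g, hg⟩ => ?_
  change ENNReal.ofReal (∫ x in Ω, v x * (g (Fin.last n) x +
    divergence (fun i => g i.castSucc) x)) ≤ _
  have hdiv := hg.integrableOn_mul_divergence hv
  have hdiv_le : ENNReal.ofReal (∫ x in Ω, v x * divergence (fun i => g i.castSucc) x) ≤
      volume Ω + Afun n Ω v :=
    calc ENNReal.ofReal (∫ x in Ω, v x * divergence (fun i => g i.castSucc) x)
        = ENNReal.ofReal ((∫ x in Ω, -g (Fin.last n) x) + ∫ x in Ω, (g (Fin.last n) x +
            v x * divergence (fun i => g i.castSucc) x)) := by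
          rw [integral_neg, integral_add hg.integrable_last.integrableOn hdiv,
            neg_add_cancel_left]
      _ ≤ volume Ω + Afun n Ω v := ENNReal.ofReal_add_le.trans <| add_le_add
          (ofReal_setIntegral_le_measure (fun x => (abs_neg _).trans_le (hg.abs_le_one _ x)) Ω)
          hg.ofReal_le_Afun
  simp_rw [mul_add]
  rw [integral_add (hg.integrableOn_mul_last hv) hdiv, add_assoc]
  exact ENNReal.ofReal_add_le.trans
    (add_le_add (ofReal_integral_mul_le_lintegral_enorm (hg.abs_le_one _)) hdiv_le)

end AreaFunctionals

/-- for `v ∈ L¹_loc(Ω)`, `F(v)` is finite iff `v ∈ BV(Ω)`,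
i.e. iff `v ∈ L¹(Ω)` and `A(v) < ∞`. -/
theorem stmt_7 (n : ℕ) (Ω : Set (EuclideanSpace ℝ (Fin n)))
    (hΩo : IsOpen Ω) (hΩb : Bornology.IsBounded Ω)
    (v : EuclideanSpace ℝ (Fin n) → ℝ) (hv : LocallyIntegrableOn v Ω) :
    Ffun n Ω v < ⊤ ↔ IntegrableOn v Ω ∧ Afun n Ω v < ⊤ := by
  constructor
  · intro hF
    have hL1 : IntegrableOn v Ω :=
      integrableOn_of_forall_setIntegral_mul_le (C := (Ffun n Ω v).toReal) hΩo hv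
        fun φ hφ hφc hφΩ hφ1 => (ENNReal.ofReal_le_iff_le_toReal hF.ne).1 <|
          ofReal_setIntegral_mul_le_Ffun (hφ.of_le (by norm_cast)) hφc hφΩ hφ1
    exact ⟨hL1, (Afun_le_volume_add_Ffun hv).trans_lt
      (ENNReal.add_lt_top.2 ⟨hΩb.measure_lt_top, hF⟩)⟩
  · rintro ⟨hL1, hA⟩
    exact (Ffun_le_lintegral_add_volume_add_Afun hv).trans_lt <| ENNReal.add_lt_top.2
      ⟨ENNReal.add_lt_top.2 ⟨hL1.hasFiniteIntegral, hΩb.measure_lt_top⟩, hA⟩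
end

section
/- Let B ⊂ ℝⁿ be open, let u ∈ C²(B), and set w := e^{−u} (so w is a positive C² function on B). Then at every point x ∈ B, the equation div(Dw/√(w²+|Dw|²)) = w/√(w²+|Dw|²) + ln w holds at x if and only if the equation div(Du/√(1+|Du|²)) = −1/√(1+|Du|²) + u holds at x. -/
open scoped RealInnerProductSpace

/-- The divergence of a vector field `X` on `ℝⁿ`, as the trace of its derivative. -/
noncomputable def vdiv (n : ℕ)
    (X : EuclideanSpace ℝ (Fin n) → EuclideanSpace ℝ (Fin n))
    (x : EuclideanSpace ℝ (Fin n)) : ℝ :=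
  LinearMap.trace ℝ (EuclideanSpace ℝ (Fin n)) (fderiv ℝ X x)

/-- The mean curvature operator `M u = div (Du / √(1 + |Du|²))`. -/
noncomputable def meanCurv (n : ℕ) (u : EuclideanSpace ℝ (Fin n) → ℝ)
    (x : EuclideanSpace ℝ (Fin n)) : ℝ :=
  vdiv n (fun y => (Real.sqrt (1 + ‖gradient u y‖ ^ 2))⁻¹ • gradient u y) x

/-
Since `Dw = -w Du` and `w > 0`, one has `√(w² + |Dw|²) = w √(1 + |Du|²)`, so the vector field
`Dw / √(w² + |Dw|²)` is exactly `-Du / √(1 + |Du|²)` and `w / √(w² + |Dw|²) = 1 / √(1 + |Du|²)`.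
Together with `ln w = -u`, the first equation is the second one multiplied by `-1`.
-/

section Gradient

lemma differentiableAt_of_differentiableAt_exp_neg {E : Type*} [NormedAddCommGroup E]
    [NormedSpace ℝ E] {u : E → ℝ} {y : E}
    (h : DifferentiableAt ℝ (fun z => Real.exp (-u z)) y) : DifferentiableAt ℝ u y := by
  simpa [Real.log_exp] using (h.log (Real.exp_ne_zero _)).neg

variable {E : Type*} [NormedAddCommGroup E] [InnerProductSpace ℝ E] [CompleteSpace E]

lemma gradient_exp_neg (u : E → ℝ) (y : E) :
    gradient (fun z => Real.exp (-u z)) y = (-Real.exp (-u y)) • gradient u y := by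
  by_cases hu : DifferentiableAt ℝ u y
  · have hderiv : fderiv ℝ (fun z => Real.exp (-u z)) y = (-Real.exp (-u y)) • fderiv ℝ u y := by
      have h : HasFDerivAt (fun z => Real.exp (-u z)) (Real.exp (-u y) • -fderiv ℝ u y) y :=
        hu.hasFDerivAt.neg.exp
      rw [h.fderiv, smul_neg, neg_smul]
    rw [gradient, gradient, hderiv, map_smul]
  · -- both gradients take the junk value `0`
    have hexp : ¬DifferentiableAt ℝ (fun z => Real.exp (-u z)) y :=
      mt differentiableAt_of_differentiableAt_exp_neg hu
    rw [gradient_eq_zero_of_not_differentiableAt hu,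
      gradient_eq_zero_of_not_differentiableAt hexp, smul_zero]

end Gradient

section Normalization

variable {E : Type*} [NormedAddCommGroup E] [NormedSpace ℝ E]

lemma sqrt_sq_add_norm_neg_smul_sq {c : ℝ} (hc : 0 < c) (v : E) :
    Real.sqrt (c ^ 2 + ‖(-c) • v‖ ^ 2) = c * Real.sqrt (1 + ‖v‖ ^ 2) := by
  rw [norm_smul, Real.norm_eq_abs, abs_neg, abs_of_pos hc,
    show c ^ 2 + (c * ‖v‖) ^ 2 = c ^ 2 * (1 + ‖v‖ ^ 2) by ring,
    Real.sqrt_mul (by positivity), Real.sqrt_sq hc.le]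

lemma div_sqrt_sq_add_norm_neg_smul_sq {c : ℝ} (hc : 0 < c) (v : E) :
    c / Real.sqrt (c ^ 2 + ‖(-c) • v‖ ^ 2) = (Real.sqrt (1 + ‖v‖ ^ 2))⁻¹ := by
  rw [sqrt_sq_add_norm_neg_smul_sq hc, div_mul_cancel_left₀ hc.ne']

lemma inv_sqrt_sq_add_norm_neg_smul_sq_smul {c : ℝ} (hc : 0 < c) (v : E) :
    (Real.sqrt (c ^ 2 + ‖(-c) • v‖ ^ 2))⁻¹ • (-c) • v = -((Real.sqrt (1 + ‖v‖ ^ 2))⁻¹ • v) := by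
  rw [smul_smul, ← div_eq_inv_mul, neg_div, div_sqrt_sq_add_norm_neg_smul_sq hc, neg_smul]

end Normalization

lemma vdiv_neg (n : ℕ) (X : EuclideanSpace ℝ (Fin n) → EuclideanSpace ℝ (Fin n))
    (x : EuclideanSpace ℝ (Fin n)) : vdiv n (fun y => -X y) x = -vdiv n X x := by
  rw [vdiv, vdiv, fderiv_fun_neg, ContinuousLinearMap.toLinearMap_neg, map_neg]

theorem stmt_15_general (n : ℕ) (B : Set (EuclideanSpace ℝ (Fin n)))
    (u w : EuclideanSpace ℝ (Fin n) → ℝ)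
    (hw : ∀ y, w y = Real.exp (-u y)) :
    ∀ x ∈ B,
      (vdiv n (fun y => (Real.sqrt (w y ^ 2 + ‖gradient w y‖ ^ 2))⁻¹ • gradient w y) x
          = w x / Real.sqrt (w x ^ 2 + ‖gradient w x‖ ^ 2) + Real.log (w x)
        ↔
       meanCurv n u x = -(Real.sqrt (1 + ‖gradient u x‖ ^ 2))⁻¹ + u x) := by
  intro x _
  obtain rfl : w = fun y => Real.exp (-u y) := funext hw
  simp only [gradient_exp_neg, inv_sqrt_sq_add_norm_neg_smul_sq_smul (Real.exp_pos _),
    div_sqrt_sq_add_norm_neg_smul_sq (Real.exp_pos _), vdiv_neg, Real.log_exp]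
  rw [← meanCurv]
  constructor <;> intro h <;> linarith

/-- for `u ∈ C²(B)` and `w = e^{-u}`, the equation
`div(Dw/√(w²+|Dw|²)) = w/√(w²+|Dw|²) + ln w` holds at a point `x ∈ B` iff
`div(Du/√(1+|Du|²)) = -1/√(1+|Du|²) + u` holds at `x`. -/
theorem stmt_15 (n : ℕ) (B : Set (EuclideanSpace ℝ (Fin n))) (hB : IsOpen B)
    (u w : EuclideanSpace ℝ (Fin n) → ℝ) (hu : ContDiffOn ℝ 2 u B)
    (hw : ∀ y, w y = Real.exp (-u y)) :
    ∀ x ∈ B,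
      (vdiv n (fun y => (Real.sqrt (w y ^ 2 + ‖gradient w y‖ ^ 2))⁻¹ • gradient w y) x
          = w x / Real.sqrt (w x ^ 2 + ‖gradient w x‖ ^ 2) + Real.log (w x)
        ↔
       meanCurv n u x = -(Real.sqrt (1 + ‖gradient u x‖ ^ 2))⁻¹ + u x) :=
  stmt_15_general n B u w hw
end
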